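/- arXiv:1203.5377 — 2 statements merged into one kernel-verified Lean document; each statement's English description precedes it below -/
import Mathlib

section
/- Let A and B be strictly positive definite m×m complex matrices. Then for every m×m matrix C, the quantity tr[C* ((A,B)# C)] is a nonnegative real number, and it equals 0 if and only if C = 0. -/
open MeasureTheory Matrix
open scoped ComplexOrder

attribute [local instance] Matrix.frobeniusNormedAddCommGroup Matrix.frobeniusNormedSpace

variable {m : ℕ}

/-- `(A,B)#C = ∫₀¹ A^{1-s} C B^s ds`, with powers by functional calculus. -/
noncomputable def matSharp (A B C : Matrix (Fin m) (Fin m) ℂ) : Matrix (Fin m) (Fin m) ℂ :=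
  ∫ s in (0:ℝ)..1,
    cfc (fun t : ℝ => t ^ (1 - s)) A * C * cfc (fun t : ℝ => t ^ s) B

/-- `(A,B)♯̂C = ∫₀^∞ (A+xI)⁻¹ C (B+xI)⁻¹ dx`. -/
noncomputable def matSharpHat (A B C : Matrix (Fin m) (Fin m) ℂ) : Matrix (Fin m) (Fin m) ℂ :=
  ∫ x in Set.Ioi (0:ℝ), (A + (x : ℂ) • 1)⁻¹ * C * (B + (x : ℂ) • 1)⁻¹

/-!
Diagonalize `A = U diag(a) U*` and `B = V diag(b) V*` and put `M = U* C V`. Then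
`A^{1-s} C B^s = U ((a_i^{1-s} b_j^s)_{ij} ⊙ M) V*`, so integrating in `s` gives
`(A,B)#C = U (L ⊙ M) V*` with `L_ij` the logarithmic mean of `a_i` and `b_j`, and hence
`tr[C* ((A,B)#C)] = ∑_{ij} L_ij |M_ij|²`. All weights `L_ij` are positive, so this is a
nonnegative real that vanishes only for `M = 0`, i.e. for `C = 0`.
-/

/-- The logarithmic mean of `x` and `y`: `(x - y) / (log x - log y)` when `x ≠ y`. -/
noncomputable def logMean (x y : ℝ) : ℝ := ∫ s in (0:ℝ)..1, x ^ (1 - s) * y ^ s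

lemma continuous_rpow_one_sub_mul_rpow {x y : ℝ} (hx : 0 < x) (hy : 0 < y) :
    Continuous fun s : ℝ => x ^ (1 - s) * y ^ s :=
  ((Real.continuous_const_rpow hx.ne').comp (continuous_sub_left 1)).mul
    (Real.continuous_const_rpow hy.ne')

lemma logMean_pos {x y : ℝ} (hx : 0 < x) (hy : 0 < y) : 0 < logMean x y :=
  intervalIntegral.intervalIntegral_pos_of_pos_on
    ((continuous_rpow_one_sub_mul_rpow hx hy).intervalIntegrable _ _)
    (fun _ _ => mul_pos (Real.rpow_pos_of_pos hx _) (Real.rpow_pos_of_pos hy _)) one_pos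

namespace Matrix

variable {n : Type*} [Fintype n]

lemma diagonal_mul_mul_diagonal [DecidableEq n] {α : Type*} [CommSemiring α] (d e : n → α)
    (M : Matrix n n α) :
    diagonal d * M * diagonal e = of (fun i j => d i * e j) ⊙ M := by
  ext i j
  simp only [mul_diagonal, diagonal_mul, hadamard_apply, of_apply]
  ring

lemma IsHermitian.cfc_mul_mul_cfc [DecidableEq n] {A B : Matrix n n ℂ} (hA : A.IsHermitian)
    (hB : B.IsHermitian) (f g : ℝ → ℝ) (C : Matrix n n ℂ) :
    cfc f A * C * cfc g B =
      (hA.eigenvectorUnitary : Matrix n n ℂ) *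
        (of (fun i j => ((f (hA.eigenvalues i) * g (hB.eigenvalues j) : ℝ) : ℂ)) ⊙
          ((hA.eigenvectorUnitary : Matrix n n ℂ)ᴴ * C * hB.eigenvectorUnitary)) *
        (hB.eigenvectorUnitary : Matrix n n ℂ)ᴴ := by
  have hfg : of (fun i j => ((f (hA.eigenvalues i) * g (hB.eigenvalues j) : ℝ) : ℂ)) =
      of fun i j =>
        (RCLike.ofReal ∘ f ∘ hA.eigenvalues) i *
          (RCLike.ofReal ∘ g ∘ hB.eigenvalues) j := by
    ext; simp
  simp only [hA.cfc_eq, hB.cfc_eq, IsHermitian.cfc, Unitary.conjStarAlgAut_apply, hfg,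
    star_eq_conjTranspose, ← diagonal_mul_mul_diagonal, mul_assoc]

lemma intervalIntegral_mul_hadamard_mul (U V M : Matrix n n ℂ) {φ : n → n → ℝ → ℂ}
    (hφ : ∀ i j, Continuous (φ i j)) (a b : ℝ) :
    ∫ s in a..b, U * (of (fun i j => φ i j s) ⊙ M) * V =
      U * (of (fun i j => ∫ s in a..b, φ i j s) ⊙ M) * V := by
  let L : Matrix n n ℂ →ₗ[ℂ] Matrix n n ℂ :=
    { toFun := fun X => U * (X ⊙ M) * V
      map_add' := fun X Y => by simp only [add_hadamard, mul_add, add_mul]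
      map_smul' := fun c X => by
        simp only [smul_hadamard, mul_smul_comm, smul_mul_assoc, RingHom.id_apply] }
  have hΦ : Continuous fun s => of fun i j => φ i j s :=
    continuous_pi fun i => continuous_pi fun j => hφ i j
  have hentry (i j : n) : (∫ s in a..b, of fun i j => φ i j s) i j = ∫ s in a..b, φ i j s :=
    ((entryLinearMap ℂ ℂ i j).toContinuousLinearMap.intervalIntegral_comp_comm
      (hΦ.intervalIntegrable a b)).symm
  rw [show (of fun i j => ∫ s in a..b, φ i j s) = ∫ s in a..b, of fun i j => φ i j s from
    ext fun i j => (hentry i j).symm]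
  exact L.toContinuousLinearMap.intervalIntegral_comp_comm (hΦ.intervalIntegrable a b)

lemma trace_conjTranspose_mul_mul_mul_conjTranspose {α : Type*} [CommSemiring α]
    [StarRing α] (C U X V : Matrix n n α) :
    (Cᴴ * (U * X * Vᴴ)).trace = ((Uᴴ * C * V)ᴴ * X).trace := by
  rw [← mul_assoc, trace_mul_comm, conjTranspose_mul, conjTranspose_mul,
    conjTranspose_conjTranspose]
  simp only [mul_assoc]

lemma trace_conjTranspose_mul_hadamard (w : n → n → ℝ) (M : Matrix n n ℂ) :
    (Mᴴ * (of (fun i j => (w i j : ℂ)) ⊙ M)).trace =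
      ((∑ i, ∑ j, w i j * Complex.normSq (M i j) : ℝ) : ℂ) := by
  simp only [trace, diag, mul_apply, hadamard_apply, of_apply, conjTranspose_apply,
    Complex.ofReal_sum, Complex.ofReal_mul, Complex.normSq_eq_conj_mul_self]
  rw [Finset.sum_comm]
  exact Finset.sum_congr rfl fun i _ => Finset.sum_congr rfl fun j _ => by
    simp only [RCLike.star_def]; ring

lemma sum_sum_mul_normSq_nonneg {w : n → n → ℝ} (hw : ∀ i j, 0 ≤ w i j)
    (M : Matrix n n ℂ) : 0 ≤ ∑ i, ∑ j, w i j * Complex.normSq (M i j) :=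
  Finset.sum_nonneg fun i _ => Finset.sum_nonneg fun j _ =>
    mul_nonneg (hw i j) (Complex.normSq_nonneg _)

lemma sum_sum_mul_normSq_eq_zero_iff {w : n → n → ℝ} (hw : ∀ i j, 0 < w i j)
    (M : Matrix n n ℂ) : ∑ i, ∑ j, w i j * Complex.normSq (M i j) = 0 ↔ M = 0 := by
  have hterm : ∀ i j, 0 ≤ w i j * Complex.normSq (M i j) := fun i j =>
    mul_nonneg (hw i j).le (Complex.normSq_nonneg _)
  simp only [Finset.sum_eq_zero_iff_of_nonneg (fun i _ => Finset.sum_nonneg fun j _ => hterm i j),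
    Finset.sum_eq_zero_iff_of_nonneg (fun j _ => hterm _ j), Finset.mem_univ, true_implies,
    mul_eq_zero, (hw _ _).ne', false_or, Complex.normSq_eq_zero]
  exact ⟨fun h => ext h, fun h i j => by simp [h]⟩

lemma unitary_conjTranspose_mul_mul_eq_zero_iff [DecidableEq n] (U V : unitary (Matrix n n ℂ))
    (C : Matrix n n ℂ) : (U : Matrix n n ℂ)ᴴ * C * V = 0 ↔ C = 0 := by
  refine ⟨fun h => ?_, fun h => by simp [h]⟩
  have hC : C = U * ((U : Matrix n n ℂ)ᴴ * C * V) * (V : Matrix n n ℂ)ᴴ := by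
    simp only [← star_eq_conjTranspose, ← mul_assoc, Unitary.mul_star_self_of_mem U.2, one_mul,
      mul_assoc C, Unitary.mul_star_self_of_mem V.2, mul_one]
  rw [hC, h, mul_zero, zero_mul]

end Matrix

lemma matSharp_eq {A B : Matrix (Fin m) (Fin m) ℂ} (hA : A.PosDef) (hB : B.PosDef)
    (C : Matrix (Fin m) (Fin m) ℂ) :
    matSharp A B C =
      (hA.1.eigenvectorUnitary : Matrix (Fin m) (Fin m) ℂ) *
        (of (fun i j => (logMean (hA.1.eigenvalues i) (hB.1.eigenvalues j) : ℂ)) ⊙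
          ((hA.1.eigenvectorUnitary : Matrix (Fin m) (Fin m) ℂ)ᴴ * C *
            hB.1.eigenvectorUnitary)) *
        (hB.1.eigenvectorUnitary : Matrix (Fin m) (Fin m) ℂ)ᴴ := by
  simp only [matSharp, hA.1.cfc_mul_mul_cfc hB.1]
  rw [intervalIntegral_mul_hadamard_mul (φ := fun i j s =>
      ((hA.1.eigenvalues i ^ (1 - s) * hB.1.eigenvalues j ^ s : ℝ) : ℂ)) _ _ _
    (fun i j => Complex.continuous_ofReal.comp
      (continuous_rpow_one_sub_mul_rpow (hA.eigenvalues_pos i) (hB.eigenvalues_pos j)))]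
  simp only [intervalIntegral.integral_ofReal, logMean]

/-- For strictly positive definite `A`, `B` and any `C`, `tr[C* ((A,B)# C)]` is a
nonnegative real number, vanishing iff `C = 0`. -/
theorem trace_sharp_nonneg (A B : Matrix (Fin m) (Fin m) ℂ)
    (hA : A.PosDef) (hB : B.PosDef) (C : Matrix (Fin m) (Fin m) ℂ) :
    (Cᴴ * matSharp A B C).trace.im = 0 ∧ 0 ≤ (Cᴴ * matSharp A B C).trace.re ∧
      ((Cᴴ * matSharp A B C).trace = 0 ↔ C = 0) := by
  have hw : ∀ i j, 0 < logMean (hA.1.eigenvalues i) (hB.1.eigenvalues j) := fun i j =>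
    logMean_pos (hA.eigenvalues_pos i) (hB.eigenvalues_pos j)
  rw [matSharp_eq hA hB, trace_conjTranspose_mul_mul_mul_conjTranspose,
    trace_conjTranspose_mul_hadamard, Complex.ofReal_im, Complex.ofReal_re,
    Complex.ofReal_eq_zero, sum_sum_mul_normSq_eq_zero_iff hw,
    unitary_conjTranspose_mul_mul_eq_zero_iff]
  exact ⟨rfl, sum_sum_mul_normSq_nonneg (fun i j => (hw i j).le) _, Iff.rfl⟩
end

section
/- Let A and B be strictly positive definite m×m complex matrices. Then for all m×m matrices C and D, tr[C* ((A,B)# D)] equals the complex conjugate of tr[D* ((A,B)# C)]. -/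
/-!
For Hermitian `P`, `Q` the map `C ↦ P * C * Q` is self-adjoint for the Hilbert–Schmidt inner
product `⟪C, D⟫ = tr (Cᴴ * D)`. The map `C ↦ (A,B)#C` is an integral of such maps, with
`P = A ^ (1 - s)` and `Q = B ^ s`, and since these depend continuously on `s` (the eigenvalues of
`A` and `B` are positive), the trace and the complex conjugation pass through the integral.
-/

open MeasureTheory Matrix
open scoped ComplexOrder

attribute [local instance] Matrix.frobeniusNormedAddCommGroup Matrix.frobeniusNormedSpace

variable {m : ℕ}

namespace Matrix

variable {n 𝕜 : Type*} [Fintype n] [RCLike 𝕜]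

theorem trace_conjTranspose_mul_mul_mul_eq_star {R : Type*} [CommRing R] [StarRing R]
    {P Q : Matrix n n R} (hP : P.IsHermitian) (hQ : Q.IsHermitian) (C D : Matrix n n R) :
    (Cᴴ * (P * D * Q)).trace = star (Dᴴ * (P * C * Q)).trace := by
  rw [← trace_conjTranspose]
  simp only [conjTranspose_mul, conjTranspose_conjTranspose, hP.eq, hQ.eq, Matrix.mul_assoc]
  rw [trace_mul_comm Q]
  simp only [Matrix.mul_assoc]

theorem trace_mul_intervalIntegral_of_continuous {f : ℝ → Matrix n n 𝕜} (hf : Continuous f)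
    (a b : ℝ) (X : Matrix n n 𝕜) :
    (X * ∫ s in a..b, f s).trace = ∫ s in a..b, (X * f s).trace :=
  ((traceLinearMap n 𝕜 𝕜 ∘ₗ LinearMap.mulLeft 𝕜 X).toContinuousLinearMap.intervalIntegral_comp_comm
    (hf.intervalIntegrable a b)).symm

section Cfc

variable [DecidableEq n]

theorem IsHermitian.continuous_cfc_fun {A : Matrix n n 𝕜} (hA : A.IsHermitian) {X : Type*}
    [TopologicalSpace X] {f : X → ℝ → ℝ} (hf : ∀ i, Continuous fun x ↦ f x (hA.eigenvalues i)) :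
    Continuous fun x ↦ cfc (f x) A := by
  simp only [hA.cfc_eq, IsHermitian.cfc, Unitary.conjStarAlgAut_apply]
  refine (continuous_const.matrix_mul (continuous_pi fun i ↦ ?_).matrix_diagonal).matrix_mul
    continuous_const
  exact RCLike.continuous_ofReal.comp (hf i)

theorem PosDef.continuous_cfc_rpow {A : Matrix n n 𝕜} (hA : A.PosDef) {X : Type*}
    [TopologicalSpace X] {g : X → ℝ} (hg : Continuous g) :
    Continuous fun x ↦ cfc (fun t : ℝ ↦ t ^ g x) A :=
  hA.isHermitian.continuous_cfc_fun fun i ↦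
    (Real.continuous_const_rpow (hA.eigenvalues_pos i).ne').comp hg

end Cfc

end Matrix

/-- For strictly positive definite `A`, `B` and all `C`, `D`:
`tr[C* ((A,B)# D)]` is the complex conjugate of `tr[D* ((A,B)# C)]`. -/
theorem trace_sharp_conj_symm (A B : Matrix (Fin m) (Fin m) ℂ)
    (hA : A.PosDef) (hB : B.PosDef) (C D : Matrix (Fin m) (Fin m) ℂ) :
    (Cᴴ * matSharp A B D).trace = starRingEnd ℂ ((Dᴴ * matSharp A B C).trace) := by
  have hP := hA.continuous_cfc_rpow (continuous_sub_left 1)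
  have hQ := hB.continuous_cfc_rpow continuous_id
  have hPXQ (X : Matrix (Fin m) (Fin m) ℂ) :
      Continuous fun s : ℝ ↦ cfc (fun t : ℝ ↦ t ^ (1 - s)) A * X * cfc (fun t : ℝ ↦ t ^ s) B :=
    (hP.matrix_mul continuous_const).matrix_mul hQ
  rw [matSharp, matSharp, trace_mul_intervalIntegral_of_continuous (hPXQ D),
    trace_mul_intervalIntegral_of_continuous (hPXQ C), ← intervalIntegral.intervalIntegral_conj]
  congr 1 with s
  exact trace_conjTranspose_mul_mul_mul_eq_star (cfc_predicate _ A) (cfc_predicate _ B) C D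
end
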